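/- arXiv:2301.12174 — 4 statements merged into one kernel-verified Lean document; each statement's English description precedes it below -/
import Mathlib

section
/- Let g, p ∈ ℝⁿ, let H be a symmetric n×n real matrix, let V be an n×k real matrix whose columns form an orthonormal basis of span{g, p}, and set H̃ = V Vᵀ H V Vᵀ. For α = (α₁, α₂) ∈ ℝ² define w(α) = −α₁ g + α₂ p, c = (−‖g‖², gᵀp)ᵀ ∈ ℝ², Q = [[gᵀHg, −pᵀHg], [−pᵀHg, pᵀHp]] and G = [[‖g‖², −gᵀp], [−gᵀp, ‖p‖²]]. Then for every α ∈ ℝ²: (i) cᵀα + (1/2)αᵀQα = gᵀw(α) + (1/2)w(α)ᵀH̃w(α); (ii) αᵀGα = ‖w(α)‖²; and (iii) for every Δ > 0, the infimum of cᵀα + (1/2)αᵀQα over {α ∈ ℝ² : αᵀGα ≤ Δ²} equals the infimum of gᵀd + (1/2)dᵀH̃d over {d ∈ ℝⁿ : ‖d‖ ≤ Δ}. -/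
open RealInnerProductSpace Matrix

lemma toEL_mul {l m n : Type*} [Fintype l] [Fintype m] [Fintype n]
    [DecidableEq l] [DecidableEq m]
    (A : Matrix n m ℝ) (B : Matrix m l ℝ) (x : EuclideanSpace ℝ l) :
    toEuclideanLin (A * B) x = toEuclideanLin A (toEuclideanLin B x) := by
  simp [Matrix.toEuclideanLin_apply, Matrix.mulVec_mulVec]

lemma toEL_adj {m n : Type*} [Fintype m] [Fintype n] [DecidableEq m] [DecidableEq n]
    (A : Matrix m n ℝ) (x : EuclideanSpace ℝ m) (y : EuclideanSpace ℝ n) :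
    ⟪toEuclideanLin Aᵀ x, y⟫ = ⟪x, toEuclideanLin A y⟫ := by
  rw [← Matrix.conjTranspose_eq_transpose_of_trivial,
    Matrix.toEuclideanLin_conjTranspose_eq_adjoint, LinearMap.adjoint_inner_left]

lemma toEL_one {n : Type*} [Fintype n] [DecidableEq n] (x : EuclideanSpace ℝ n) :
    toEuclideanLin (1 : Matrix n n ℝ) x = x := by
  simp [Matrix.toEuclideanLin_apply]

/-- **Equivalence of the dimension-reduced and full-scale trust-region subproblems.**
`g, p ∈ ℝⁿ`, `H` symmetric, `V` has orthonormal columns spanning `span{g, p}`,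
`H̃ = V Vᵀ H V Vᵀ`, `w(α) = −α₁ g + α₂ p`. -/
theorem drtr_equiv_fullscale {n k : ℕ}
    (g p : EuclideanSpace ℝ (Fin n))
    (H : Matrix (Fin n) (Fin n) ℝ) (hH : H.IsSymm)
    (V : Matrix (Fin n) (Fin k) ℝ)
    (hVorth : Vᵀ * V = 1)
    (hVspan : LinearMap.range (Matrix.toEuclideanLin V) = Submodule.span ℝ {g, p})
    (Htil : Matrix (Fin n) (Fin n) ℝ) (hHtil : Htil = V * Vᵀ * H * V * Vᵀ)
    (w : (Fin 2 → ℝ) → EuclideanSpace ℝ (Fin n))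
    (hw : ∀ α : Fin 2 → ℝ, w α = -(α 0) • g + (α 1) • p)
    (c : Fin 2 → ℝ) (hc : c = ![-(‖g‖ ^ 2), ⟪g, p⟫])
    (Q : Matrix (Fin 2) (Fin 2) ℝ)
    (hQ : Q = !![⟪g, Matrix.toEuclideanLin H g⟫, -⟪p, Matrix.toEuclideanLin H g⟫;
                 -⟪p, Matrix.toEuclideanLin H g⟫, ⟪p, Matrix.toEuclideanLin H p⟫])
    (G : Matrix (Fin 2) (Fin 2) ℝ)
    (hG : G = !![‖g‖ ^ 2, -⟪g, p⟫; -⟪g, p⟫, ‖p‖ ^ 2]) :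
    (∀ α : Fin 2 → ℝ,
        c ⬝ᵥ α + (1 / 2) * (α ⬝ᵥ Q.mulVec α)
          = ⟪g, w α⟫ + (1 / 2) * ⟪w α, Matrix.toEuclideanLin Htil (w α)⟫) ∧
    (∀ α : Fin 2 → ℝ, α ⬝ᵥ G.mulVec α = ‖w α‖ ^ 2) ∧
    (∀ Δ : ℝ, 0 < Δ →
      sInf {v : ℝ | ∃ α : Fin 2 → ℝ, α ⬝ᵥ G.mulVec α ≤ Δ ^ 2 ∧
              v = c ⬝ᵥ α + (1 / 2) * (α ⬝ᵥ Q.mulVec α)}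
        = sInf {v : ℝ | ∃ d : EuclideanSpace ℝ (Fin n), ‖d‖ ≤ Δ ∧
              v = ⟪g, d⟫ + (1 / 2) * ⟪d, Matrix.toEuclideanLin Htil d⟫}) := by
  obtain ⟨P, hP⟩ : ∃ P : Matrix (Fin n) (Fin n) ℝ, P = V * Vᵀ := ⟨_, rfl⟩
  -- P is symmetric
  have hPsymm : Pᵀ = P := by simp [hP, Matrix.transpose_mul]
  -- P is idempotent
  have hPP : P * P = P := by
    rw [hP, Matrix.mul_assoc, ← Matrix.mul_assoc Vᵀ V Vᵀ, hVorth, Matrix.one_mul]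
  -- inner-product self-adjointness of P
  have hPinner : ∀ x y : EuclideanSpace ℝ (Fin n),
      ⟪toEuclideanLin P x, y⟫ = ⟪x, toEuclideanLin P y⟫ := by
    intro x y
    conv_lhs => rw [← hPsymm]
    exact toEL_adj P x y
  -- P fixes range of V
  have hVtV : ∀ z : EuclideanSpace ℝ (Fin k),
      toEuclideanLin Vᵀ (toEuclideanLin V z) = z := by
    intro z
    rw [← toEL_mul, hVorth, toEL_one]
  have hPfix : ∀ x : EuclideanSpace ℝ (Fin n),
      x ∈ LinearMap.range (Matrix.toEuclideanLin V) → toEuclideanLin P x = x := by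
    rintro x ⟨y, rfl⟩
    rw [hP, toEL_mul, hVtV]
  have hgmem : g ∈ Submodule.span ℝ ({g, p} : Set (EuclideanSpace ℝ (Fin n))) :=
    Submodule.subset_span (by simp)
  have hpmem : p ∈ Submodule.span ℝ ({g, p} : Set (EuclideanSpace ℝ (Fin n))) :=
    Submodule.subset_span (by simp)
  have hPg : toEuclideanLin P g = g := hPfix g (by rw [hVspan]; exact hgmem)
  have hPp : toEuclideanLin P p = p := hPfix p (by rw [hVspan]; exact hpmem)
  have hPw : ∀ α : Fin 2 → ℝ, toEuclideanLin P (w α) = w α := by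
    intro α
    rw [hw]
    simp [map_add, _root_.map_smul, hPg, hPp]
  -- Htil = P * (H * P)
  have hHtil' : Htil = P * (H * P) := by
    rw [hHtil, hP]
    simp [Matrix.mul_assoc]
  -- the quadratic form of Htil
  have hquad : ∀ x : EuclideanSpace ℝ (Fin n),
      ⟪x, toEuclideanLin Htil x⟫
        = ⟪toEuclideanLin P x, toEuclideanLin H (toEuclideanLin P x)⟫ := by
    intro x
    rw [hHtil', toEL_mul, toEL_mul, ← hPinner]
  -- symmetry of H in inner products
  have hHsym : ⟪g, toEuclideanLin H p⟫ = ⟪p, toEuclideanLin H g⟫ := by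
    calc ⟪g, toEuclideanLin H p⟫ = ⟪toEuclideanLin Hᵀ g, p⟫ := (toEL_adj H g p).symm
      _ = ⟪toEuclideanLin H g, p⟫ := by rw [hH.eq]
      _ = ⟪p, toEuclideanLin H g⟫ := real_inner_comm _ _
  -- Part (i)
  have part1 : ∀ α : Fin 2 → ℝ,
      c ⬝ᵥ α + (1 / 2) * (α ⬝ᵥ Q.mulVec α)
        = ⟪g, w α⟫ + (1 / 2) * ⟪w α, Matrix.toEuclideanLin Htil (w α)⟫ := by
    intro α
    have h1 : ⟪w α, Matrix.toEuclideanLin Htil (w α)⟫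
        = ⟪w α, toEuclideanLin H (w α)⟫ := by
      rw [hquad, hPw]
    rw [h1, hw, hc, hQ]
    simp only [Matrix.mulVec, dotProduct, Fin.sum_univ_two,
      Matrix.cons_val', Matrix.cons_val_zero, Matrix.cons_val_one, Matrix.head_cons,
      Matrix.empty_val', Matrix.cons_val_fin_one, Matrix.head_fin_const, Matrix.of_apply,
      map_add, map_neg, _root_.map_smul, smul_neg,
      inner_add_left, inner_add_right, real_inner_smul_left, real_inner_smul_right,
      inner_neg_left, inner_neg_right]
    rw [real_inner_self_eq_norm_sq g]
    linear_combination (α 0 * α 1 / 2) * hHsym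
  -- Part (ii)
  have part2 : ∀ α : Fin 2 → ℝ, α ⬝ᵥ G.mulVec α = ‖w α‖ ^ 2 := by
    intro α
    rw [hw, hG]
    conv_rhs => rw [← real_inner_self_eq_norm_sq]
    simp only [Matrix.mulVec, dotProduct, Fin.sum_univ_two,
      Matrix.cons_val', Matrix.cons_val_zero, Matrix.cons_val_one, Matrix.head_cons,
      Matrix.empty_val', Matrix.cons_val_fin_one, Matrix.head_fin_const, Matrix.of_apply,
      inner_add_left, inner_add_right, real_inner_smul_left, real_inner_smul_right,
      inner_neg_left, inner_neg_right]
    rw [real_inner_self_eq_norm_sq g, real_inner_self_eq_norm_sq p, real_inner_comm p g]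
    ring
  refine ⟨part1, part2, ?_⟩
  -- Part (iii)
  intro Δ hΔ
  have hsets : {v : ℝ | ∃ α : Fin 2 → ℝ, α ⬝ᵥ G.mulVec α ≤ Δ ^ 2 ∧
          v = c ⬝ᵥ α + (1 / 2) * (α ⬝ᵥ Q.mulVec α)}
      = {v : ℝ | ∃ d : EuclideanSpace ℝ (Fin n), ‖d‖ ≤ Δ ∧
          v = ⟪g, d⟫ + (1 / 2) * ⟪d, Matrix.toEuclideanLin Htil d⟫} := by
    ext v
    constructor
    · rintro ⟨α, hα, rfl⟩
      refine ⟨w α, ?_, part1 α⟩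
      have h2 := part2 α
      nlinarith [norm_nonneg (w α), hΔ.le]
    · rintro ⟨d, hd, rfl⟩
      obtain ⟨d', hd'⟩ : ∃ d' : EuclideanSpace ℝ (Fin n), d' = toEuclideanLin P d := ⟨_, rfl⟩
      have hd'mem : d' ∈ Submodule.span ℝ ({g, p} : Set (EuclideanSpace ℝ (Fin n))) := by
        rw [← hVspan, hd', hP, toEL_mul]
        exact ⟨_, rfl⟩
      obtain ⟨a, b, hab⟩ := Submodule.mem_span_pair.mp hd'mem
      have hwα : w ![-a, b] = d' := by
        rw [hw]
        simp only [Matrix.cons_val_zero, Matrix.cons_val_one, Matrix.head_cons, neg_neg]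
        exact hab
      -- projection is idempotent on d'
      have hPd' : toEuclideanLin P d' = d' := by
        rw [hd', ← toEL_mul, hPP]
      -- norm of projection
      have hnorm : ‖d'‖ ≤ ‖d‖ := by
        have h1 : ‖d'‖ ^ 2 = ⟪d, d'⟫ := by
          rw [← real_inner_self_eq_norm_sq]
          calc ⟪d', d'⟫ = ⟪toEuclideanLin P d, d'⟫ := by rw [← hd']
            _ = ⟪d, toEuclideanLin P d'⟫ := hPinner d d'
            _ = ⟪d, d'⟫ := by rw [hPd']
        have h2 : ⟪d, d'⟫ ≤ ‖d‖ * ‖d'‖ := real_inner_le_norm d d'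
        nlinarith [norm_nonneg d, norm_nonneg d']
      refine ⟨![-a, b], ?_, ?_⟩
      · rw [part2 _, hwα]
        have h3 : ‖d'‖ ≤ Δ := le_trans hnorm hd
        nlinarith [norm_nonneg d']
      · rw [part1 _, hwα]
        have e1 : ⟪g, d'⟫ = ⟪g, d⟫ := by
          rw [hd', ← hPinner, hPg]
        have e2 : ⟪d', Matrix.toEuclideanLin Htil d'⟫ = ⟪d, Matrix.toEuclideanLin Htil d⟫ := by
          rw [hquad, hquad, hPd', hd']
        rw [e1, e2]
  rw [hsets]
end

section
/- Let g, p ∈ ℝⁿ, let H be a symmetric n×n real matrix, let V be an n×k real matrix whose columns form an orthonormal basis of span{g, p}, and set H̃ = V Vᵀ H V Vᵀ. Define c = (−‖g‖², gᵀp)ᵀ, Q = [[gᵀHg, −pᵀHg], [−pᵀHg, pᵀHp]], G = [[‖g‖², −gᵀp], [−gᵀp, ‖p‖²]], and for α ∈ ℝ² set w(α) = −α₁ g + α₂ p. Suppose α* ∈ ℝ², λ ≥ 0 and Δ > 0 satisfy (Q + λG)α* + c = 0, Q + λG is positive semidefinite, and λ(Δ² − (α*)ᵀG α*) = 0. Then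 d = w(α*) satisfies (H̃ + λI)d + g = 0, H̃ + λI is positive semidefinite, and λ(Δ − ‖d‖) = 0. -/
open RealInnerProductSpace Matrix

/-! With `b = (-g, p)` the data of the reduced problem are Gram-type matrices of this family:
`Q = (⟪b i, H b j⟫)`, `G = (⟪b i, b j⟫)`, `c = (⟪b i, g⟫)`, and `w(α) = ∑ αᵢ bᵢ`. So the reduced
stationarity equation says that the full residual `H d + λ d + g` is orthogonal to `span {g, p}`,
reduced semidefiniteness says that `H + λ I` is positive semidefinite on that span, and
`α*ᵀ G α* = ‖d‖²`. Since `V Vᵀ` is the orthogonal projection `P` onto `span {g, p}`, we have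
`H̃ = P H P`; projecting the residual gives stationarity of `d`, and since `‖P x‖ ≤ ‖x‖`,
`⟪x, (H̃ + λ I) x⟫ ≥ ⟪P x, (H + λ I) P x⟫ ≥ 0`. -/

open Submodule

section InnerMatrix

variable {ι E : Type*} [NormedAddCommGroup E] [InnerProductSpace ℝ E]

def innerMatrix (B : E →ₗ[ℝ] E) (b : ι → E) : Matrix ι ι ℝ :=
  Matrix.of fun i j => ⟪b i, B (b j)⟫

lemma innerMatrix_add_smul (B C : E →ₗ[ℝ] E) (t : ℝ) (b : ι → E) :
    innerMatrix B b + t • innerMatrix C b = innerMatrix (B + t • C) b := by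
  ext i j
  simp [innerMatrix, inner_add_right, inner_smul_right]

variable [Fintype ι]

lemma innerMatrix_mulVec_apply (B : E →ₗ[ℝ] E) (b : ι → E) (α : ι → ℝ) (i : ι) :
    (innerMatrix B b *ᵥ α) i = ⟪b i, B (∑ j, α j • b j)⟫ := by
  simp [innerMatrix, Matrix.mulVec, dotProduct, inner_sum, inner_smul_right, mul_comm]

lemma dotProduct_innerMatrix_mulVec (B : E →ₗ[ℝ] E) (b : ι → E) (α : ι → ℝ) :
    α ⬝ᵥ innerMatrix B b *ᵥ α = ⟪∑ i, α i • b i, B (∑ j, α j • b j)⟫ := by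
  simp [dotProduct, innerMatrix_mulVec_apply, sum_inner, inner_smul_left]

lemma inner_self_nonneg_of_mem_span_of_posSemidef {B : E →ₗ[ℝ] E} {b : ι → E}
    (hB : (innerMatrix B b).PosSemidef) {u : E} (hu : u ∈ span ℝ (Set.range b)) :
    0 ≤ ⟪u, B u⟫ := by
  obtain ⟨α, rfl⟩ := (mem_span_range_iff_exists_fun ℝ).1 hu
  simpa [dotProduct_innerMatrix_mulVec] using hB.dotProduct_mulVec_nonneg α

lemma mem_orthogonal_span_range_iff {b : ι → E} {v : E} :
    v ∈ (span ℝ (Set.range b))ᗮ ↔ ∀ i, ⟪b i, v⟫ = 0 := by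
  refine ⟨fun hv i => inner_right_of_mem_orthogonal (subset_span (Set.mem_range_self i)) hv,
    fun hv u hu => ?_⟩
  obtain ⟨α, rfl⟩ := (mem_span_range_iff_exists_fun ℝ).1 hu
  simp [sum_inner, inner_smul_left, hv]

lemma add_mem_orthogonal_of_innerMatrix_mulVec_add_eq_zero {B : E →ₗ[ℝ] E} {b : ι → E}
    {α : ι → ℝ} {g : E} (h : innerMatrix B b *ᵥ α + (fun i => ⟪b i, g⟫) = 0) :
    B (∑ i, α i • b i) + g ∈ (span ℝ (Set.range b))ᗮ := by
  refine mem_orthogonal_span_range_iff.2 fun i => ?_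
  simpa [inner_add_right, innerMatrix_mulVec_apply] using congrFun h i

lemma innerMatrix_neg_pair {A : E →ₗ[ℝ] E} (hA : A.IsSymmetric) (g p : E) :
    innerMatrix A ![-g, p] = !![⟪g, A g⟫, -⟪p, A g⟫; -⟪p, A g⟫, ⟪p, A p⟫] := by
  ext i j
  fin_cases i <;> fin_cases j <;>
    simp [innerMatrix, ← hA g p, real_inner_comm (A g) p]

lemma innerMatrix_id_neg_pair (g p : E) :
    innerMatrix LinearMap.id ![-g, p] = !![‖g‖ ^ 2, -⟪g, p⟫; -⟪g, p⟫, ‖p‖ ^ 2] := by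
  ext i j
  fin_cases i <;> fin_cases j <;> simp [innerMatrix, real_inner_comm g p]

lemma span_range_neg_pair (g p : E) : span ℝ (Set.range ![-g, p]) = span ℝ {g, p} := by
  rw [Matrix.range_cons, Matrix.range_cons, Matrix.range_empty, Set.union_empty,
    Set.singleton_union, span_insert, ← Set.neg_singleton, span_neg, ← span_insert]

end InnerMatrix

section Projection

variable {E : Type*} [NormedAddCommGroup E] [InnerProductSpace ℝ E]
  (K : Submodule ℝ E) [K.HasOrthogonalProjection]

lemma starProjection_comp_apply_add_smul_add_eq_zero (A : E →ₗ[ℝ] E) {d g : E} {lam : ℝ}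
    (hd : d ∈ K) (hg : g ∈ K) (hres : A d + lam • d + g ∈ Kᗮ) :
    K.starProjection (A (K.starProjection d)) + lam • d + g = 0 := by
  have hPd : K.starProjection d = d := starProjection_eq_self_iff.2 hd
  have hPg : K.starProjection g = g := starProjection_eq_self_iff.2 hg
  calc K.starProjection (A (K.starProjection d)) + lam • d + g
      = K.starProjection (A d + lam • d + g) := by simp [hPd, hPg]
    _ = 0 := (starProjection_apply_eq_zero_iff K).2 hres

lemma isPositive_starProjection_conj_add_smul_id {A : E →ₗ[ℝ] E} (hA : A.IsSymmetric)
    {lam : ℝ} (hlam : 0 ≤ lam) (hK : ∀ u ∈ K, 0 ≤ ⟪u, (A + lam • LinearMap.id : E →ₗ[ℝ] E) u⟫) :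
    ((K.starProjection : E →ₗ[ℝ] E) ∘ₗ A ∘ₗ K.starProjection + lam • LinearMap.id).IsPositive := by
  set P : E →ₗ[ℝ] E := K.starProjection.toLinearMap
  have hP : P.IsSymmetric := K.starProjection_isSymmetric
  refine (LinearMap.isPositive_iff _).2 ⟨fun x y => ?_, fun x => ?_⟩
  · simp [inner_add_left, inner_add_right, inner_smul_left, inner_smul_right, hP _ y, hA _ (P y),
      ← hP x]
  calc 0 ≤ ⟪P x, (A + lam • LinearMap.id : E →ₗ[ℝ] E) (P x)⟫ := hK _ (K.starProjection_apply_mem x)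
    _ = ⟪P x, A (P x)⟫ + lam * ‖P x‖ ^ 2 := by
      simp [inner_add_right, inner_smul_right]
    _ ≤ ⟪P x, A (P x)⟫ + lam * ‖x‖ ^ 2 := by
      gcongr
      exact K.norm_starProjection_apply_le x
    _ = ⟪(P ∘ₗ A ∘ₗ P + lam • LinearMap.id : E →ₗ[ℝ] E) x, x⟫ := by
      simp [inner_add_left, inner_smul_left, hP _ x, real_inner_comm]

end Projection

lemma Matrix.toEuclideanLin_mul_conjTranspose_eq_starProjection {𝕜 m n : Type*} [RCLike 𝕜]
    [Fintype m] [DecidableEq m] [Fintype n] [DecidableEq n] {V : Matrix m n 𝕜}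
    (hV : Vᴴ * V = 1) :
    toEuclideanLin (V * Vᴴ) = (LinearMap.range (toEuclideanLin V)).starProjection.toLinearMap := by
  set T := toEuclideanLin V
  have hadj : toEuclideanLin Vᴴ = T.adjoint := toEuclideanLin_conjTranspose_eq_adjoint V
  have hT : T.adjoint ∘ₗ T = LinearMap.id := by
    rw [← hadj, ← toLpLin_mul_same, hV, toLpLin_one]
  have hP : toEuclideanLin (V * Vᴴ) = T ∘ₗ T.adjoint := by
    rw [← hadj]
    exact toLpLin_mul_same _ _ _
  ext1 x
  rw [hP, LinearMap.comp_apply]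
  refine (eq_starProjection_of_mem_of_inner_eq_zero (LinearMap.mem_range_self _ _) ?_).symm
  rintro _ ⟨y, rfl⟩
  rw [← LinearMap.adjoint_inner_left, map_sub, ← LinearMap.comp_apply T.adjoint T, hT]
  simp

lemma mul_sub_eq_zero_of_mul_sq_sub_sq_eq_zero {t a b : ℝ} (ha : 0 ≤ a) (hb : 0 ≤ b)
    (h : t * (a ^ 2 - b ^ 2) = 0) : t * (a - b) = 0 := by
  rcases mul_eq_zero.1 h with ht | hab
  · simp [ht]
  · simp [(sq_eq_sq₀ ha hb).1 (sub_eq_zero.1 hab)]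

/-- **KKT conditions transfer from the dimension-reduced trust-region subproblem to the
full-scale one.** If `(α*, λ)` satisfies the trust-region optimality conditions for
`(c, Q, G, Δ²)`, then `d = w(α*) = −α*₁ g + α*₂ p` satisfies the optimality conditions
for the full-scale problem with projected Hessian `H̃ = V Vᵀ H V Vᵀ`. -/
theorem drtr_kkt_to_fullscale_kkt {n k : ℕ}
    (g p : EuclideanSpace ℝ (Fin n))
    (H : Matrix (Fin n) (Fin n) ℝ) (hH : H.IsSymm)
    (V : Matrix (Fin n) (Fin k) ℝ)
    (hVorth : Vᵀ * V = 1)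
    (hVspan : LinearMap.range (Matrix.toEuclideanLin V) = Submodule.span ℝ {g, p})
    (Htil : Matrix (Fin n) (Fin n) ℝ) (hHtil : Htil = V * Vᵀ * H * V * Vᵀ)
    (c : Fin 2 → ℝ) (hc : c = ![-(‖g‖ ^ 2), ⟪g, p⟫])
    (Q : Matrix (Fin 2) (Fin 2) ℝ)
    (hQ : Q = !![⟪g, Matrix.toEuclideanLin H g⟫, -⟪p, Matrix.toEuclideanLin H g⟫;
                 -⟪p, Matrix.toEuclideanLin H g⟫, ⟪p, Matrix.toEuclideanLin H p⟫])
    (G : Matrix (Fin 2) (Fin 2) ℝ)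
    (hG : G = !![‖g‖ ^ 2, -⟪g, p⟫; -⟪g, p⟫, ‖p‖ ^ 2])
    (αstar : Fin 2 → ℝ) (lam Δ : ℝ) (hlam : 0 ≤ lam) (hΔ : 0 < Δ)
    (hstat : (Q + lam • G).mulVec αstar + c = 0)
    (hpsd : (Q + lam • G).PosSemidef)
    (hcomp : lam * (Δ ^ 2 - αstar ⬝ᵥ G.mulVec αstar) = 0)
    (d : EuclideanSpace ℝ (Fin n)) (hd : d = -(αstar 0) • g + (αstar 1) • p) :
    Matrix.toEuclideanLin Htil d + lam • d + g = 0 ∧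
    (Htil + lam • (1 : Matrix (Fin n) (Fin n) ℝ)).PosSemidef ∧
    lam * (Δ - ‖d‖) = 0 := by
  set A := toEuclideanLin H
  set b := ![-g, p]
  set K := span ℝ (Set.range b)
  have hA : A.IsSymmetric := isSymmetric_toEuclideanLin_iff.2 (isHermitian_iff_isSymm.2 hH)
  have hK : LinearMap.range (toEuclideanLin V) = K := hVspan.trans (span_range_neg_pair g p).symm
  have hHtilP : toEuclideanLin Htil = K.starProjection.toLinearMap ∘ₗ A ∘ₗ K.starProjection := by
    rw [← hK, ← toEuclideanLin_mul_conjTranspose_eq_starProjection (by simpa using hVorth), hHtil]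
    simp only [Matrix.mul_assoc, toLpLin_mul_same]
    rfl
  have hM : Q + lam • G = innerMatrix (A + lam • LinearMap.id) b := by
    rw [hQ, hG, ← innerMatrix_neg_pair hA, ← innerMatrix_id_neg_pair, innerMatrix_add_smul]
  have hd' : d = ∑ i, αstar i • b i := by simp [hd, b]
  have hc' : c = fun i => ⟪b i, g⟫ := by
    ext i; fin_cases i <;> simp [hc, b, real_inner_comm]
  refine ⟨?_, ?_, ?_⟩
  · rw [hHtilP]
    refine starProjection_comp_apply_add_smul_add_eq_zero K A
      ((mem_span_range_iff_exists_fun ℝ).2 ⟨αstar, hd'.symm⟩)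
      (hK ▸ hVspan ▸ subset_span (Set.mem_insert g _)) ?_
    have := add_mem_orthogonal_of_innerMatrix_mulVec_add_eq_zero (hM ▸ hc' ▸ hstat)
    rwa [← hd', LinearMap.add_apply, LinearMap.smul_apply, LinearMap.id_apply] at this
  · rw [← isPositive_toEuclideanLin_iff, map_add, map_smul, toLpLin_one, hHtilP]
    exact isPositive_starProjection_conj_add_smul_id K hA hlam
      fun u hu => inner_self_nonneg_of_mem_span_of_posSemidef (hM ▸ hpsd) hu
  · refine mul_sub_eq_zero_of_mul_sq_sub_sq_eq_zero hΔ.le (norm_nonneg d) ?_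
    rwa [hG, ← innerMatrix_id_neg_pair, dotProduct_innerMatrix_mulVec, ← hd',
      LinearMap.id_apply, real_inner_self_eq_norm_sq] at hcomp
end

section
/- Let J : ℝⁿ → ℝ be twice continuously differentiable with M-Lipschitz Hessian. Let θ, d, g ∈ ℝⁿ, let H̃ be a symmetric n×n real matrix, and let λ ≥ 0 satisfy (H̃ + λI)d + g = 0 with H̃ + λI positive semidefinite. Then (λ/2)‖d‖² ≤ J(θ) − J(θ + d) + ‖∇J(θ) − g‖·‖d‖ + (1/2)‖∇²J(θ) − H̃‖·‖d‖² + (M/6)‖d‖³. -/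
/-!
Taylor's theorem with an `M`-Lipschitz Hessian gives
`J(θ + d) ≤ J(θ) + ⟪∇J(θ), d⟫ + ½⟪∇²J(θ) d, d⟫ + (M/6)‖d‖³`; both remainder estimates come from
integrating a bound `C tᵏ` on a derivative along the segment `t ↦ θ + t d`. Replacing `∇J(θ)` by `g`
and `∇²J(θ)` by `H̃` costs the two error terms. Stationarity gives
`⟪g, d⟫ = -⟪H̃ d, d⟫ - λ‖d‖²`, so the right-hand side becomes
`J(θ) + errors - ½(⟪H̃ d, d⟫ + λ‖d‖²) - (λ/2)‖d‖²`, and positive semidefiniteness of `H̃ + λI`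
discards the middle term.
-/

open RealInnerProductSpace

theorem norm_le_mul_pow_succ_div_of_norm_deriv_le {E : Type*} [NormedAddCommGroup E]
    [NormedSpace ℝ E] {f f' : ℝ → E} {C : ℝ} (k : ℕ) (hf : ∀ t, HasDerivAt f (f' t) t)
    (h0 : f 0 = 0) (hbound : ∀ t, 0 ≤ t → ‖f' t‖ ≤ C * t ^ k) {t : ℝ} (ht : 0 ≤ t) :
    ‖f t‖ ≤ C * t ^ (k + 1) / (k + 1) := by
  have hB : ∀ s : ℝ, HasDerivAt (fun s => C * s ^ (k + 1) / (k + 1)) (C * s ^ k) s := fun s => by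
    refine (((hasDerivAt_pow (k + 1) s).const_mul C).div_const ((k : ℝ) + 1)).congr_deriv ?_
    push_cast
    field_simp
  refine image_norm_le_of_norm_deriv_right_le_deriv_boundary (a := 0) (b := t)
    (fun s _ => (hf s).continuousAt.continuousWithinAt) (fun s _ => (hf s).hasDerivWithinAt)
    (by simp [h0]) hB (fun s hs => hbound s hs.1) ⟨ht, le_rfl⟩

section FirstOrder

variable {E G : Type*} [NormedAddCommGroup E] [NormedSpace ℝ E]
  [NormedAddCommGroup G] [NormedSpace ℝ G]

theorem DifferentiableAt.hasDerivAt_comp_add_smul {f : E → G} {x d : E} {t : ℝ}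
    (hf : DifferentiableAt ℝ f (x + t • d)) :
    HasDerivAt (fun s : ℝ => f (x + s • d)) (fderiv ℝ f (x + t • d) d) t :=
  hf.hasFDerivAt.comp_hasDerivAt t <| by
    simpa using ((hasDerivAt_id t).smul_const d).const_add x

theorem norm_sub_sub_fderiv_le_of_lipschitz_fderiv {f : E → G} {M : ℝ}
    (hf : Differentiable ℝ f) (hLip : ∀ x y, ‖fderiv ℝ f x - fderiv ℝ f y‖ ≤ M * ‖x - y‖)
    (x d : E) {t : ℝ} (ht : 0 ≤ t) :
    ‖f (x + t • d) - f x - t • fderiv ℝ f x d‖ ≤ M * ‖d‖ ^ 2 * t ^ 2 / 2 := by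
  have hderiv : ∀ s : ℝ, HasDerivAt (fun s : ℝ => f (x + s • d) - f x - s • fderiv ℝ f x d)
      (fderiv ℝ f (x + s • d) d - fderiv ℝ f x d) s := fun s =>
    (((hf _).hasDerivAt_comp_add_smul).sub_const (f x)).sub
      (by simpa using (hasDerivAt_id s).smul_const (fderiv ℝ f x d))
  have hbound : ∀ s : ℝ, 0 ≤ s →
      ‖fderiv ℝ f (x + s • d) d - fderiv ℝ f x d‖ ≤ M * ‖d‖ ^ 2 * s ^ 1 := fun s hs =>
    calc ‖fderiv ℝ f (x + s • d) d - fderiv ℝ f x d‖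
        ≤ ‖fderiv ℝ f (x + s • d) - fderiv ℝ f x‖ * ‖d‖ := by
          rw [← sub_apply]; exact ContinuousLinearMap.le_opNorm _ _
      _ ≤ M * ‖s • d‖ * ‖d‖ := by
          gcongr; simpa using hLip (x + s • d) x
      _ = M * ‖d‖ ^ 2 * s ^ 1 := by rw [norm_smul, Real.norm_of_nonneg hs]; ring
  convert norm_le_mul_pow_succ_div_of_norm_deriv_le 1 hderiv (by simp) hbound ht using 1
  norm_num

end FirstOrder

section SecondOrder

variable {F : Type*} [NormedAddCommGroup F] [InnerProductSpace ℝ F] [CompleteSpace F]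

theorem ContDiff.differentiable_gradient {J : F → ℝ} (hJ : ContDiff ℝ 2 J) :
    Differentiable ℝ (gradient J) := by
  have : ContDiff ℝ 1 (fderiv ℝ J) := hJ.fderiv_right (by norm_num)
  exact (InnerProductSpace.toDual ℝ F).symm.differentiable.comp (this.differentiable one_ne_zero)

theorem abs_sub_taylor_two_le_of_lipschitz_hessian {J : F → ℝ} {M : ℝ}
    (hJ : Differentiable ℝ J) (hgrad : Differentiable ℝ (gradient J))
    (hLip : ∀ x y, ‖fderiv ℝ (gradient J) x - fderiv ℝ (gradient J) y‖ ≤ M * ‖x - y‖)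
    (x d : F) :
    |J (x + d) - J x - ⟪gradient J x, d⟫ - 1 / 2 * ⟪fderiv ℝ (gradient J) x d, d⟫|
      ≤ M / 6 * ‖d‖ ^ 3 := by
  set H := fderiv ℝ (gradient J) x
  have hderiv : ∀ t : ℝ, HasDerivAt
      (fun t : ℝ => J (x + t • d) - J x - t * ⟪gradient J x, d⟫ - t ^ 2 / 2 * ⟪H d, d⟫)
      ⟪gradient J (x + t • d) - gradient J x - t • H d, d⟫ t := fun t => by
    have hline := (hJ (x + t • d)).hasDerivAt_comp_add_smul (d := d)
    rw [← inner_gradient_left] at hline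
    refine (((hline.sub_const (J x)).sub ((hasDerivAt_id t).mul_const ⟪gradient J x, d⟫)).sub
      (((hasDerivAt_pow 2 t).div_const 2).mul_const ⟪H d, d⟫)).congr_deriv ?_
    simp only [inner_sub_left, real_inner_smul_left]
    ring
  have hbound : ∀ t : ℝ, 0 ≤ t →
      ‖⟪gradient J (x + t • d) - gradient J x - t • H d, d⟫‖ ≤ M * ‖d‖ ^ 3 / 2 * t ^ 2 :=
    fun t ht => calc
      _ ≤ ‖gradient J (x + t • d) - gradient J x - t • H d‖ * ‖d‖ := norm_inner_le_norm _ _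
      _ ≤ M * ‖d‖ ^ 2 * t ^ 2 / 2 * ‖d‖ := by
          gcongr; exact norm_sub_sub_fderiv_le_of_lipschitz_fderiv hgrad hLip x d ht
      _ = M * ‖d‖ ^ 3 / 2 * t ^ 2 := by ring
  convert norm_le_mul_pow_succ_div_of_norm_deriv_le 2 hderiv (by simp) hbound zero_le_one using 1
  · simp only [Real.norm_eq_abs, one_smul, one_mul, one_pow]
  · norm_num; ring

end SecondOrder

theorem multiplier_bound_of_trust_region_step_general {n : ℕ} (M : ℝ)
    (J : EuclideanSpace ℝ (Fin n) → ℝ)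
    (hJ : ContDiff ℝ 2 J)
    (hLip : ∀ θ₁ θ₂ : EuclideanSpace ℝ (Fin n),
      ‖fderiv ℝ (gradient J) θ₁ - fderiv ℝ (gradient J) θ₂‖ ≤ M * ‖θ₁ - θ₂‖)
    (θ d g : EuclideanSpace ℝ (Fin n))
    (Htil : EuclideanSpace ℝ (Fin n) →L[ℝ] EuclideanSpace ℝ (Fin n))
    (lam : ℝ)
    (hstat : Htil d + lam • d + g = 0)
    (hpsd : ∀ x : EuclideanSpace ℝ (Fin n), 0 ≤ ⟪Htil x, x⟫ + lam * ‖x‖ ^ 2) :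
    (lam / 2) * ‖d‖ ^ 2
      ≤ J θ - J (θ + d)
        + ‖gradient J θ - g‖ * ‖d‖
        + (1 / 2) * ‖fderiv ℝ (gradient J) θ - Htil‖ * ‖d‖ ^ 2
        + (M / 6) * ‖d‖ ^ 3 := by
  have taylor := (abs_le.mp (abs_sub_taylor_two_le_of_lipschitz_hessian
    (hJ.differentiable two_ne_zero) hJ.differentiable_gradient hLip θ d)).2
  set H := fderiv ℝ (gradient J) θ
  have hg : ⟪g, d⟫ = -⟪Htil d, d⟫ - lam * ‖d‖ ^ 2 := by
    rw [eq_neg_of_add_eq_zero_right hstat, inner_neg_left, inner_add_left, real_inner_smul_left,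
      real_inner_self_eq_norm_sq]
    ring
  have hgrad_err : ⟪gradient J θ - g, d⟫ ≤ ‖gradient J θ - g‖ * ‖d‖ := real_inner_le_norm _ _
  have hhess_err : ⟪(H - Htil) d, d⟫ ≤ ‖H - Htil‖ * ‖d‖ ^ 2 :=
    calc ⟪(H - Htil) d, d⟫ ≤ ‖(H - Htil) d‖ * ‖d‖ := real_inner_le_norm _ _
      _ ≤ ‖H - Htil‖ * ‖d‖ * ‖d‖ := by gcongr; exact (H - Htil).le_opNorm d
      _ = ‖H - Htil‖ * ‖d‖ ^ 2 := by ring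
  simp only [inner_sub_left, sub_apply] at hgrad_err hhess_err
  linarith [hpsd d]

/-- **Multiplier bound from one trust-region step.** If `J : ℝⁿ → ℝ` is `C²` with
`M`-Lipschitz Hessian and `(H̃ + λI)d + g = 0` with `H̃ + λI` positive semidefinite and
`λ ≥ 0`, then
`(λ/2)‖d‖² ≤ J(θ) − J(θ+d) + ‖∇J(θ) − g‖‖d‖ + ½‖∇²J(θ) − H̃‖‖d‖² + (M/6)‖d‖³`. -/
theorem multiplier_bound_of_trust_region_step {n : ℕ} (M : ℝ)
    (J : EuclideanSpace ℝ (Fin n) → ℝ)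
    (hJ : ContDiff ℝ 2 J)
    (hLip : ∀ θ₁ θ₂ : EuclideanSpace ℝ (Fin n),
      ‖fderiv ℝ (gradient J) θ₁ - fderiv ℝ (gradient J) θ₂‖ ≤ M * ‖θ₁ - θ₂‖)
    (θ d g : EuclideanSpace ℝ (Fin n))
    (Htil : EuclideanSpace ℝ (Fin n) →L[ℝ] EuclideanSpace ℝ (Fin n))
    (hHtil : ∀ x y : EuclideanSpace ℝ (Fin n), ⟪Htil x, y⟫ = ⟪x, Htil y⟫)
    (lam : ℝ) (hlam : 0 ≤ lam)
    (hstat : Htil d + lam • d + g = 0)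
    (hpsd : ∀ x : EuclideanSpace ℝ (Fin n), 0 ≤ ⟪Htil x, x⟫ + lam * ‖x‖ ^ 2) :
    (lam / 2) * ‖d‖ ^ 2
      ≤ J θ - J (θ + d)
        + ‖gradient J θ - g‖ * ‖d‖
        + (1 / 2) * ‖fderiv ℝ (gradient J) θ - Htil‖ * ‖d‖ ^ 2
        + (M / 6) * ‖d‖ ^ 3 :=
  multiplier_bound_of_trust_region_step_general M J hJ hLip θ d g Htil lam hstat hpsd
end

section
/- Let J : ℝⁿ → ℝ be twice continuously differentiable with M-Lipschitz Hessian. Then for all θ, d, g ∈ ℝⁿ and all n×n real matrices H and H̃, ‖∇J(θ + d)‖ ≤ (M/2)‖d‖² + ‖∇J(θ) − g‖ + ‖∇²J(θ) − H‖·‖d‖ + ‖g + H̃d‖ + ‖(H̃ − H)d‖. -/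
/-!
Write `G = ∇J` and `A = ∇²J(θ)`. Along the segment `t ↦ θ + t d`, the Taylor remainder
`G (θ + t d) - G θ - t A d` has derivative `(∇²J(θ + t d) - A) d`, of norm at most `M t ‖d‖²`;
comparing with `t ↦ (M/2) ‖d‖² t²` gives `‖G (θ + d) - G θ - A d‖ ≤ (M/2) ‖d‖²`. The bound then
follows from the triangle inequality applied to
`G (θ + d) = (G (θ + d) - G θ - A d) + (G θ - g) + (A - H) d + (g + H̃ d) - (H̃ - H) d`.
-/

open Set

section TaylorRemainder

variable {E F : Type*} [NormedAddCommGroup E] [NormedSpace ℝ E]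
  [NormedAddCommGroup F] [NormedSpace ℝ F]

theorem hasDerivAt_taylor_remainder_line {G : E → F} (hG : Differentiable ℝ G) (x h : E) (t : ℝ) :
    HasDerivAt (fun s : ℝ => G (x + s • h) - G x - s • fderiv ℝ G x h)
      (fderiv ℝ G (x + t • h) h - fderiv ℝ G x h) t := by
  have hline : HasDerivAt (fun s : ℝ => x + s • h) h t := by
    simpa using ((hasDerivAt_id t).smul_const h).const_add x
  have hlin : HasDerivAt (fun s : ℝ => s • fderiv ℝ G x h) (fderiv ℝ G x h) t := by
    simpa using (hasDerivAt_id t).smul_const (fderiv ℝ G x h)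
  exact (((hG _).hasFDerivAt.comp_hasDerivAt t hline).sub_const (G x)).sub hlin

theorem norm_image_sub_sub_fderiv_le_of_lipschitz_fderiv {M : ℝ} {G : E → F}
    (hG : Differentiable ℝ G)
    (hLip : ∀ x y : E, ‖fderiv ℝ G x - fderiv ℝ G y‖ ≤ M * ‖x - y‖) (x h : E) :
    ‖G (x + h) - G x - fderiv ℝ G x h‖ ≤ M / 2 * ‖h‖ ^ 2 := by
  have hderiv := hasDerivAt_taylor_remainder_line hG x h
  have hbound : ∀ t ∈ Ico (0 : ℝ) 1,
      ‖fderiv ℝ G (x + t • h) h - fderiv ℝ G x h‖ ≤ M * ‖h‖ ^ 2 * t := by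
    intro t ht
    calc ‖fderiv ℝ G (x + t • h) h - fderiv ℝ G x h‖
        ≤ ‖fderiv ℝ G (x + t • h) - fderiv ℝ G x‖ * ‖h‖ :=
          (fderiv ℝ G (x + t • h) - fderiv ℝ G x).le_opNorm h
      _ ≤ M * ‖(x + t • h) - x‖ * ‖h‖ := by gcongr; exact hLip _ _
      _ = M * ‖h‖ ^ 2 * t := by
          rw [add_sub_cancel_left, norm_smul, Real.norm_of_nonneg ht.1]; ring
  have hquad : ∀ t : ℝ, HasDerivAt (fun s : ℝ => M / 2 * ‖h‖ ^ 2 * s ^ 2) (M * ‖h‖ ^ 2 * t) t :=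
    fun t => ((hasDerivAt_pow 2 t).const_mul (M / 2 * ‖h‖ ^ 2)).congr_deriv (by push_cast; ring)
  have key := image_norm_le_of_norm_deriv_right_le_deriv_boundary
    (fun t _ => (hderiv t).continuousAt.continuousWithinAt)
    (fun t _ => (hderiv t).hasDerivWithinAt) (by simp) hquad hbound (x := 1) (by norm_num)
  simpa using key

end TaylorRemainder

theorem ContDiff.differentiable_gradient_s7 {F : Type*} [NormedAddCommGroup F]
    [InnerProductSpace ℝ F] [CompleteSpace F] {f : F → ℝ} (hf : ContDiff ℝ 2 f) :
    Differentiable ℝ (gradient f) :=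
  (InnerProductSpace.toDual ℝ F).symm.toContinuousLinearEquiv.differentiable.comp
    ((hf.fderiv_right (m := 1) (by norm_num)).differentiable (by norm_num))

/-- **Gradient norm bound at the next iterate.** If `J : ℝⁿ → ℝ` is `C²` with `M`-Lipschitz
Hessian, then for any inexact gradient `g`, inexact Hessian `H` and projected inexact
Hessian `H̃`,
`‖∇J(θ+d)‖ ≤ (M/2)‖d‖² + ‖∇J(θ) − g‖ + ‖∇²J(θ) − H‖‖d‖ + ‖g + H̃d‖ + ‖(H̃ − H)d‖`. -/
theorem gradient_norm_bound_next_iterate {n : ℕ} (M : ℝ)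
    (J : EuclideanSpace ℝ (Fin n) → ℝ)
    (hJ : ContDiff ℝ 2 J)
    (hLip : ∀ θ₁ θ₂ : EuclideanSpace ℝ (Fin n),
      ‖fderiv ℝ (gradient J) θ₁ - fderiv ℝ (gradient J) θ₂‖ ≤ M * ‖θ₁ - θ₂‖)
    (θ d g : EuclideanSpace ℝ (Fin n))
    (H Htil : EuclideanSpace ℝ (Fin n) →L[ℝ] EuclideanSpace ℝ (Fin n)) :
    ‖gradient J (θ + d)‖
      ≤ (M / 2) * ‖d‖ ^ 2
        + ‖gradient J θ - g‖
        + ‖fderiv ℝ (gradient J) θ - H‖ * ‖d‖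
        + ‖g + Htil d‖
        + ‖(Htil - H) d‖ := by
  set G := gradient J
  set A := fderiv ℝ G θ
  have htaylor : ‖G (θ + d) - G θ - A d‖ ≤ M / 2 * ‖d‖ ^ 2 :=
    norm_image_sub_sub_fderiv_le_of_lipschitz_fderiv hJ.differentiable_gradient_s7 hLip θ d
  have hdecomp : G (θ + d) =
      (G (θ + d) - G θ - A d) + (G θ - g) + (A - H) d + (g + Htil d) - (Htil - H) d := by
    simp only [sub_apply]
    abel
  calc ‖G (θ + d)‖
      = ‖(G (θ + d) - G θ - A d) + (G θ - g) + (A - H) d + (g + Htil d) - (Htil - H) d‖ :=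
        congrArg norm hdecomp
    _ ≤ ‖G (θ + d) - G θ - A d‖ + ‖G θ - g‖ + ‖(A - H) d‖ + ‖g + Htil d‖ + ‖(Htil - H) d‖ := by
        grw [norm_sub_le, norm_add₄_le]
    _ ≤ M / 2 * ‖d‖ ^ 2 + ‖G θ - g‖ + ‖A - H‖ * ‖d‖ + ‖g + Htil d‖ + ‖(Htil - H) d‖ := by
        gcongr
        exact (A - H).le_opNorm d
end
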